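/- Let D be a discrete random variable whose support has size at most n, and let C_1, …, C_{n−1} be random variables each of which is a function of D (i.e., H(C_i | D) = 0 for all i). Then the following two statements are equivalent: (1) H(C_i | C_1, …, C_{i−1}) > 0 for all i = 1, …, n−1; (2) the support of the joint random variable (C_1, …, C_i) has size exactly i + 1 for all i = 1, …, n−1. -/
import Mathlib


open scoped BigOperators

/-- Probability of an event under a pmf `μ` on a finite outcome space. -/
noncomputable def probOf {Ω : Type*} [Fintype Ω] (μ : Ω → ℝ) (E : Set Ω) : ℝ :=
  ∑ ω, E.indicator μ ω

/-- Shannon entropy (in bits) of the random variable `X` on the finite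
probability space `(Ω, μ)`. -/
noncomputable def shEntropy {Ω : Type*} {S : Type*} [Fintype Ω] (μ : Ω → ℝ) (X : Ω → S) : ℝ :=
  ∑ ω, μ ω * (- Real.logb 2 (probOf μ {ω' | X ω' = X ω}))

/-- Conditional Shannon entropy `H(Y | X)` (in bits). -/
noncomputable def shCondEntropy {Ω S T : Type*} [Fintype Ω] (μ : Ω → ℝ)
    (Y : Ω → T) (X : Ω → S) : ℝ :=
  shEntropy μ (fun ω => (X ω, Y ω)) - shEntropy μ X

/-- The support of the random variable `X` (values taken with positive probability). -/
noncomputable def rvSupport {Ω S : Type*} [Fintype Ω] (μ : Ω → ℝ) (X : Ω → S) : Finset S := by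
  classical exact (Finset.univ.filter fun ω => 0 < μ ω).image X

/-- `μ` is a probability mass function. -/
def IsPMF {Ω : Type*} [Fintype Ω] (μ : Ω → ℝ) : Prop :=
  (∀ ω, 0 ≤ μ ω) ∧ ∑ ω, μ ω = 1

/-- A polymatroid on the finite ground set `Z`. -/
def IsPolymatroid {Z : Type*} [DecidableEq Z] (h : Finset Z → ℝ) : Prop :=
  h ∅ = 0 ∧ (∀ A : Finset Z, 0 ≤ h A) ∧ (∀ A B : Finset Z, A ⊆ B → h A ≤ h B) ∧
    ∀ A B : Finset Z, h (A ∩ B) + h (A ∪ B) ≤ h A + h B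

section Aux
variable {Ω S S' T : Type*} [Fintype Ω] {μ : Ω → ℝ}

lemma probOf_nonneg (h0 : ∀ ω, 0 ≤ μ ω) (E : Set Ω) : 0 ≤ probOf μ E :=
  Finset.sum_nonneg fun ω _ => Set.indicator_nonneg (fun ω _ => h0 ω) ω

lemma probOf_mono (h0 : ∀ ω, 0 ≤ μ ω) {E F : Set Ω} (hEF : E ⊆ F) :
    probOf μ E ≤ probOf μ F := by
  refine Finset.sum_le_sum fun ω _ => ?_
  by_cases hE : ω ∈ E
  · rw [Set.indicator_of_mem hE, Set.indicator_of_mem (hEF hE)]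
  · rw [Set.indicator_of_notMem hE]
    exact Set.indicator_nonneg (fun ω _ => h0 ω) ω

lemma probOf_pos (h0 : ∀ ω, 0 ≤ μ ω) {E : Set Ω} {ω : Ω} (hω : 0 < μ ω) (hE : ω ∈ E) :
    0 < probOf μ E := by
  have h1 : E.indicator μ ω ≤ probOf μ E :=
    Finset.single_le_sum (f := E.indicator μ)
      (fun ω _ => Set.indicator_nonneg (fun ω _ => h0 ω) ω) (Finset.mem_univ ω)
  rw [Set.indicator_of_mem hE] at h1
  linarith

lemma probOf_subset_eq (h0 : ∀ ω, 0 ≤ μ ω) {E F : Set Ω} (hEF : E ⊆ F)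
    (h : probOf μ E = probOf μ F) {ω : Ω} (hω : 0 < μ ω) (hF : ω ∈ F) : ω ∈ E := by
  by_contra hE
  have hsum : ∑ ω', (F.indicator μ ω' - E.indicator μ ω') = 0 := by
    rw [Finset.sum_sub_distrib, sub_eq_zero]
    exact h.symm
  have hnn : ∀ ω' ∈ Finset.univ (α := Ω), 0 ≤ F.indicator μ ω' - E.indicator μ ω' := by
    intro ω' _
    by_cases hE' : ω' ∈ E
    · rw [Set.indicator_of_mem hE', Set.indicator_of_mem (hEF hE')]; linarith
    · rw [Set.indicator_of_notMem hE']
      simpa using Set.indicator_nonneg (fun ω _ => h0 ω) ω'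
  have := (Finset.sum_eq_zero_iff_of_nonneg hnn).mp hsum ω (Finset.mem_univ ω)
  rw [Set.indicator_of_mem hF, Set.indicator_of_notMem hE] at this
  linarith

lemma probOf_congr (h0 : ∀ ω, 0 ≤ μ ω) {E F : Set Ω}
    (h : ∀ ω, 0 < μ ω → (ω ∈ E ↔ ω ∈ F)) : probOf μ E = probOf μ F := by
  refine Finset.sum_congr rfl fun ω _ => ?_
  rcases lt_or_eq_of_le (h0 ω) with hω | hω
  · by_cases hE : ω ∈ E
    · rw [Set.indicator_of_mem hE, Set.indicator_of_mem ((h ω hω).mp hE)]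
    · rw [Set.indicator_of_notMem hE,
        Set.indicator_of_notMem (fun hF => hE ((h ω hω).mpr hF))]
  · by_cases hE : ω ∈ E <;> by_cases hF : ω ∈ F <;>
      simp [Set.indicator_of_mem, Set.indicator_of_notMem, hE, hF, ← hω]

lemma shCondEntropy_eq (μ : Ω → ℝ) (Y : Ω → T) (X : Ω → S) :
    shCondEntropy μ Y X = ∑ ω, μ ω *
      (Real.logb 2 (probOf μ {ω' | X ω' = X ω}) -
        Real.logb 2 (probOf μ {ω' | X ω' = X ω ∧ Y ω' = Y ω})) := by
  unfold shCondEntropy shEntropy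
  rw [← Finset.sum_sub_distrib]
  refine Finset.sum_congr rfl fun ω _ => ?_
  have hset : {ω' | (X ω', Y ω') = (X ω, Y ω)} = {ω' | X ω' = X ω ∧ Y ω' = Y ω} := by
    ext ω'; simp [Prod.ext_iff]
  rw [hset]; ring

lemma shCondEntropy_term_nonneg (h0 : ∀ ω, 0 ≤ μ ω) (Y : Ω → T) (X : Ω → S) (ω : Ω) :
    0 ≤ μ ω * (Real.logb 2 (probOf μ {ω' | X ω' = X ω}) -
      Real.logb 2 (probOf μ {ω' | X ω' = X ω ∧ Y ω' = Y ω})) := by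
  rcases lt_or_eq_of_le (h0 ω) with hω | hω
  · have hpos : 0 < probOf μ {ω' | X ω' = X ω ∧ Y ω' = Y ω} :=
      probOf_pos h0 hω ⟨rfl, rfl⟩
    have hle : probOf μ {ω' | X ω' = X ω ∧ Y ω' = Y ω} ≤ probOf μ {ω' | X ω' = X ω} :=
      probOf_mono h0 fun ω' h => h.1
    have := (Real.logb_le_logb (b := 2) one_lt_two hpos (lt_of_lt_of_le hpos hle)).mpr hle
    have h2 : 0 ≤ Real.logb 2 (probOf μ {ω' | X ω' = X ω}) -
        Real.logb 2 (probOf μ {ω' | X ω' = X ω ∧ Y ω' = Y ω}) := by linarith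
    positivity
  · rw [← hω]; ring_nf; simp

lemma shCondEntropy_nonneg (h0 : ∀ ω, 0 ≤ μ ω) (Y : Ω → T) (X : Ω → S) :
    0 ≤ shCondEntropy μ Y X := by
  rw [shCondEntropy_eq]
  exact Finset.sum_nonneg fun ω _ => shCondEntropy_term_nonneg h0 Y X ω

lemma shCondEntropy_eq_zero_iff (h0 : ∀ ω, 0 ≤ μ ω) (Y : Ω → T) (X : Ω → S) :
    shCondEntropy μ Y X = 0 ↔
      ∀ ω ω', 0 < μ ω → 0 < μ ω' → X ω = X ω' → Y ω = Y ω' := by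
  rw [shCondEntropy_eq]
  rw [Finset.sum_eq_zero_iff_of_nonneg (fun ω _ => shCondEntropy_term_nonneg h0 Y X ω)]
  constructor
  · intro h ω ω' hω hω' hXY
    have hterm := h ω (Finset.mem_univ ω)
    have hpos : 0 < probOf μ {ω'' | X ω'' = X ω ∧ Y ω'' = Y ω} :=
      probOf_pos h0 hω ⟨rfl, rfl⟩
    have hle : probOf μ {ω'' | X ω'' = X ω ∧ Y ω'' = Y ω} ≤ probOf μ {ω'' | X ω'' = X ω} :=
      probOf_mono h0 fun ω'' h => h.1
    have hlog : Real.logb 2 (probOf μ {ω'' | X ω'' = X ω}) =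
        Real.logb 2 (probOf μ {ω'' | X ω'' = X ω ∧ Y ω'' = Y ω}) := by
      rcases mul_eq_zero.mp hterm with h' | h'
      · linarith
      · linarith
    have hprob : probOf μ {ω'' | X ω'' = X ω ∧ Y ω'' = Y ω} =
        probOf μ {ω'' | X ω'' = X ω} := by
      by_contra hne
      have hlt : probOf μ {ω'' | X ω'' = X ω ∧ Y ω'' = Y ω} <
          probOf μ {ω'' | X ω'' = X ω} := lt_of_le_of_ne hle hne
      have := Real.logb_lt_logb (b := 2) one_lt_two hpos hlt
      linarith
    have := probOf_subset_eq h0 (fun ω'' h => h.1) hprob hω' hXY.symm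
    exact this.2.symm
  · intro h ω _
    rcases lt_or_eq_of_le (h0 ω) with hω | hω
    · have : probOf μ {ω' | X ω' = X ω ∧ Y ω' = Y ω} = probOf μ {ω' | X ω' = X ω} := by
        refine probOf_congr h0 fun ω' hω' => ?_
        exact ⟨fun h' => h'.1, fun h' => ⟨h', h ω' ω hω' hω h'⟩⟩
      rw [this]; ring
    · rw [← hω]; ring
  end Aux

section Sup
variable {Ω S S' T : Type*} [Fintype Ω] {μ : Ω → ℝ}

lemma mem_rvSupport {X : Ω → S} {x : S} :
    x ∈ rvSupport μ X ↔ ∃ ω, 0 < μ ω ∧ X ω = x := by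
  simp [rvSupport]

lemma rvSupport_nonempty (h1 : ∑ ω, μ ω = 1) (X : Ω → S) : (rvSupport μ X).Nonempty := by
  have : ∃ ω, 0 < μ ω := by
    by_contra h
    push_neg at h
    have : ∑ ω, μ ω ≤ 0 := Finset.sum_nonpos fun ω _ => h ω
    linarith
  obtain ⟨ω, hω⟩ := this
  exact ⟨X ω, mem_rvSupport.mpr ⟨ω, hω, rfl⟩⟩

lemma rvSupport_comp [DecidableEq S'] (f : S → S') (X : Ω → S) :
    rvSupport μ (fun ω => f (X ω)) = (rvSupport μ X).image f := by
  ext x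
  simp only [mem_rvSupport, Finset.mem_image]
  constructor
  · rintro ⟨ω, hω, rfl⟩; exact ⟨X ω, ⟨ω, hω, rfl⟩, rfl⟩
  · rintro ⟨y, ⟨ω, hω, rfl⟩, rfl⟩
    exact ⟨ω, hω, rfl⟩

lemma card_rvSupport_comp_le (f : S → S') (X : Ω → S) :
    (rvSupport μ (fun ω => f (X ω))).card ≤ (rvSupport μ X).card := by
  classical
  rw [rvSupport_comp]
  exact Finset.card_image_le

lemma card_rvSupport_comp_inj (f : S → S') (hf : Function.Injective f) (X : Ω → S) :
    (rvSupport μ (fun ω => f (X ω))).card = (rvSupport μ X).card := by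
  classical
  rw [rvSupport_comp]
  exact Finset.card_image_of_injective _ hf

/-- `card supp (X,Y) = card supp X` iff `Y` is determined by `X` on the support. -/
lemma card_rvSupport_pair_eq_iff (X : Ω → S) (Y : Ω → T) :
    (rvSupport μ (fun ω => (X ω, Y ω))).card = (rvSupport μ X).card ↔
      ∀ ω ω', 0 < μ ω → 0 < μ ω' → X ω = X ω' → Y ω = Y ω' := by
  classical
  have hX : rvSupport μ X = (rvSupport μ (fun ω => (X ω, Y ω))).image Prod.fst :=
    rvSupport_comp (μ := μ) Prod.fst (fun ω => (X ω, Y ω))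
  constructor
  · intro h ω ω' hω hω' hXX
    have hinj : Set.InjOn (Prod.fst : S × T → S) (↑(rvSupport μ (fun ω => (X ω, Y ω))) : Set (S × T)) := by
      apply Finset.injOn_of_card_image_eq
      rw [← hX, h]
    have h1 : (X ω, Y ω) ∈ rvSupport μ (fun ω => (X ω, Y ω)) :=
      mem_rvSupport.mpr ⟨ω, hω, rfl⟩
    have h2 : (X ω', Y ω') ∈ rvSupport μ (fun ω => (X ω, Y ω)) :=
      mem_rvSupport.mpr ⟨ω', hω', rfl⟩
    have := hinj h1 h2 hXX
    exact (Prod.ext_iff.mp this).2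
  · intro h
    rw [hX]
    refine (Finset.card_image_of_injOn (f := (Prod.fst : S × T → S)) ?_).symm
    intro p hp q hq hpq
    obtain ⟨ω, hω, rfl⟩ := mem_rvSupport.mp (Finset.mem_coe.mp hp)
    obtain ⟨ω', hω', rfl⟩ := mem_rvSupport.mp (Finset.mem_coe.mp hq)
    simp only at hpq
    exact Prod.ext hpq (h ω ω' hω hω' hpq)

lemma card_rvSupport_le_of_det (X : Ω → S) (Y : Ω → T)
    (h : ∀ ω ω', 0 < μ ω → 0 < μ ω' → X ω = X ω' → Y ω = Y ω') :
    (rvSupport μ Y).card ≤ (rvSupport μ X).card := by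
  have h1 : (rvSupport μ (fun ω => Prod.snd (X ω, Y ω))).card ≤
      (rvSupport μ (fun ω => (X ω, Y ω))).card :=
    card_rvSupport_comp_le Prod.snd (fun ω => (X ω, Y ω))
  rw [(card_rvSupport_pair_eq_iff X Y).mpr h] at h1
  exact h1

lemma card_rvSupport_const (h1 : ∑ ω, μ ω = 1) [Subsingleton S] (X : Ω → S) :
    (rvSupport μ X).card = 1 := by
  obtain ⟨x, hx⟩ := rvSupport_nonempty h1 X
  rw [Finset.card_eq_one]
  refine ⟨x, ?_⟩
  ext y
  simp only [Finset.mem_singleton]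
  constructor
  · intro _; exact Subsingleton.elim y x
  · rintro rfl; exact hx

end Sup

/-- Lemma 5 of the paper: let `D` have support of size at
most `n` and let `C_1, …, C_{n-1}` be functions of `D` (i.e. `H(C_i | D) = 0`).
Then `H(C_i | C_1, …, C_{i-1}) > 0` for all `i = 1, …, n-1` iff the support of
`(C_1, …, C_i)` has size exactly `i + 1` for all `i = 1, …, n-1`.  (Here
`i : Fin (n-1)` encodes the index `i+1 ∈ {1, …, n-1}`, so the prefix
`(C_1, …, C_i)` has `i.1 + 1` entries and claimed support size `i.1 + 2`.) -/
theorem cond_entropy_chain_pos_iff_support_card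
    {Ω T D' : Type*} [Fintype Ω] (μ : Ω → ℝ)
    (hμ0 : ∀ ω, 0 ≤ μ ω) (hμ1 : ∑ ω, μ ω = 1)
    {n : ℕ} (D : Ω → D') (hsupp : (rvSupport μ D).card ≤ n)
    (C : Fin (n - 1) → Ω → T)
    (hfun : ∀ i, shCondEntropy μ (C i) D = 0) :
    (∀ i : Fin (n - 1),
      0 < shCondEntropy μ (C i) (fun ω (j : Fin i.1) => C (Fin.castLE i.2.le j) ω)) ↔
    (∀ i : Fin (n - 1),
      (rvSupport μ (fun ω (j : Fin (i.1 + 1)) => C (Fin.castLE i.2 j) ω)).card = i.1 + 2) := by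
  rcases Nat.eq_zero_or_pos n with hn | hn
  · subst hn
    constructor <;> intro _ i <;> exact i.elim0
  -- each C i is determined by D on the support
  have hdet : ∀ (i : Fin (n - 1)) (ω ω' : Ω),
      0 < μ ω → 0 < μ ω' → D ω = D ω' → C i ω = C i ω' :=
    fun i => (shCondEntropy_eq_zero_iff hμ0 (C i) D).mp (hfun i)
  -- the support of every tuple of length 0 has exactly one element
  have hB0 : ∀ f : Ω → (Fin 0 → T), (rvSupport μ f).card = 1 := by
    intro f
    haveI : Subsingleton (Fin 0 → T) := ⟨fun f g => funext fun j => j.elim0⟩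
    exact card_rvSupport_const hμ1 f
  -- every prefix support has at most n = (n-1)+1 elements
  have hboundN : ∀ (k : ℕ) (hk : k < n - 1),
      (rvSupport μ (fun ω (j : Fin (k + 1)) => C (Fin.castLE hk j) ω)).card ≤ (n - 1) + 1 := by
    intro k hk
    have hdetP : ∀ ω ω', 0 < μ ω → 0 < μ ω' → D ω = D ω' →
        (fun j : Fin (k + 1) => C (Fin.castLE hk j) ω) =
          (fun j : Fin (k + 1) => C (Fin.castLE hk j) ω') := by
      intro ω ω' hω hω' hD
      funext j
      exact hdet (Fin.castLE hk j) ω ω' hω hω' hD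
    have h1 := card_rvSupport_le_of_det (μ := μ) D
      (fun ω (j : Fin (k + 1)) => C (Fin.castLE hk j) ω) hdetP
    omega
  -- the key per-step equivalence
  have hstep' : ∀ (k : ℕ) (hk : k < n - 1),
      (0 < shCondEntropy μ (C ⟨k, hk⟩) (fun ω (j : Fin k) => C (Fin.castLE hk.le j) ω)) ↔
        (rvSupport μ (fun ω (j : Fin k) => C (Fin.castLE hk.le j) ω)).card <
          (rvSupport μ (fun ω (j : Fin (k + 1)) => C (Fin.castLE hk j) ω)).card := by
    intro k hk
    have hpair : (rvSupport μ (fun ω =>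
        ((fun j : Fin k => C (Fin.castLE hk.le j) ω), C ⟨k, hk⟩ ω))).card =
        (rvSupport μ (fun ω (j : Fin (k + 1)) => C (Fin.castLE hk j) ω)).card := by
      have einj : Function.Injective
          (fun f : Fin (k + 1) → T => ((fun j : Fin k => f j.castSucc), f (Fin.last k))) := by
        intro f g hfg
        funext j
        refine Fin.lastCases ?_ ?_ j
        · exact congrArg Prod.snd hfg
        · intro j'
          exact congrFun (congrArg Prod.fst hfg) j'
      exact card_rvSupport_comp_inj _ einj (fun ω (j : Fin (k + 1)) => C (Fin.castLE hk j) ω)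
    have hBle : (rvSupport μ (fun ω (j : Fin k) => C (Fin.castLE hk.le j) ω)).card ≤
        (rvSupport μ (fun ω =>
          ((fun j : Fin k => C (Fin.castLE hk.le j) ω), C ⟨k, hk⟩ ω))).card :=
      card_rvSupport_comp_le (Prod.fst : (Fin k → T) × T → (Fin k → T))
        (fun ω => ((fun j : Fin k => C (Fin.castLE hk.le j) ω), C ⟨k, hk⟩ ω))
    have hdetiff := card_rvSupport_pair_eq_iff (μ := μ)
      (fun ω (j : Fin k) => C (Fin.castLE hk.le j) ω) (C ⟨k, hk⟩)
    have hzero := shCondEntropy_eq_zero_iff hμ0 (C ⟨k, hk⟩)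
      (fun ω (j : Fin k) => C (Fin.castLE hk.le j) ω)
    have hnn := shCondEntropy_nonneg hμ0 (C ⟨k, hk⟩)
      (fun ω (j : Fin k) => C (Fin.castLE hk.le j) ω)
    rw [← hpair]
    constructor
    · intro hpos
      rcases eq_or_lt_of_le hBle with heq | hlt
      · exfalso
        have h0' : shCondEntropy μ (C ⟨k, hk⟩)
            (fun ω (j : Fin k) => C (Fin.castLE hk.le j) ω) = 0 :=
          hzero.mpr (hdetiff.mp heq.symm)
        linarith
      · exact hlt
    · intro hlt
      rcases eq_or_lt_of_le hnn with heq | hpos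
      · exfalso
        have := hdetiff.mpr (hzero.mp heq.symm)
        omega
      · exact hpos
  constructor
  · -- (1) → (2)
    intro h1
    have hlt' : ∀ (k : ℕ) (hk : k < n - 1),
        (rvSupport μ (fun ω (j : Fin k) => C (Fin.castLE hk.le j) ω)).card <
          (rvSupport μ (fun ω (j : Fin (k + 1)) => C (Fin.castLE hk j) ω)).card :=
      fun k hk => (hstep' k hk).mp (h1 ⟨k, hk⟩)
    -- lower bound k + 2 ≤ card(prefix of length k+1)
    have hlow : ∀ (k : ℕ) (hk : k < n - 1),
        k + 2 ≤ (rvSupport μ (fun ω (j : Fin (k + 1)) => C (Fin.castLE hk j) ω)).card := by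
      intro k
      induction k with
      | zero =>
        intro hk
        have h := hlt' 0 hk
        have e : (rvSupport μ (fun ω (j : Fin 0) => C (Fin.castLE hk.le j) ω)).card = 1 :=
          hB0 _
        omega
      | succ k ih =>
        intro hk
        have hk' : k < n - 1 := by omega
        have h := hlt' (k + 1) hk
        have ih' : k + 2 ≤
            (rvSupport μ (fun ω (j : Fin (k + 1)) => C (Fin.castLE hk.le j) ω)).card :=
          ih hk'
        exact Nat.succ_le_of_lt (Nat.lt_of_le_of_lt ih' h)
    -- upper bound card(prefix of length k+1) ≤ k + 2, by downward induction
    have hup : ∀ (d k : ℕ) (hk : k < n - 1), n - 1 - k ≤ d + 1 →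
        (rvSupport μ (fun ω (j : Fin (k + 1)) => C (Fin.castLE hk j) ω)).card ≤ k + 2 := by
      intro d
      induction d with
      | zero =>
        intro k hk hd
        have hb := hboundN k hk
        omega
      | succ d ih =>
        intro k hk hd
        by_cases h' : k + 1 < n - 1
        · have h1' := ih (k + 1) h' (by omega)
          have h2 : (rvSupport μ (fun ω (j : Fin (k + 1)) => C (Fin.castLE hk j) ω)).card <
              (rvSupport μ (fun ω (j : Fin (k + 1 + 1)) => C (Fin.castLE h' j) ω)).card :=
            hlt' (k + 1) h'
          exact Nat.lt_succ_iff.mp (Nat.lt_of_lt_of_le h2 h1')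
        · exact ih k hk (by omega)
    intro i
    obtain ⟨k, hk⟩ := i
    exact le_antisymm (hup (n - 1) k hk (by omega)) (hlow k hk)
  · -- (2) → (1)
    intro h2
    have h2' : ∀ (k : ℕ) (hk : k < n - 1),
        (rvSupport μ (fun ω (j : Fin (k + 1)) => C (Fin.castLE hk j) ω)).card = k + 2 :=
      fun k hk => h2 ⟨k, hk⟩
    intro i
    obtain ⟨k, hk⟩ := i
    refine (hstep' k hk).mpr ?_
    match k, hk with
    | 0, hk =>
      have e : (rvSupport μ (fun ω (j : Fin 0) => C (Fin.castLE hk.le j) ω)).card = 1 :=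
        hB0 _
      have p := h2' 0 hk
      omega
    | k + 1, hk =>
      have hk' : k < n - 1 := by omega
      have e : (rvSupport μ (fun ω (j : Fin (k + 1)) => C (Fin.castLE hk.le j) ω)).card =
          (rvSupport μ (fun ω (j : Fin (k + 1)) => C (Fin.castLE hk' j) ω)).card := rfl
      have p1 := h2' k hk'
      have p2 := h2' (k + 1) hk
      omega
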